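/- Let T_n be a strongly connected arc-colored tournament of order n. Then the total number of non-rainbow triangles in T_n is at most n·(n−1)·Δ^{-mon}(T_n)/2. -/

import Mathlib

open Finset

/-- A tournament on vertex type `V`: between every two distinct vertices there is
exactly one arc, and there are no loops. -/
structure Tournament (V : Type) where
  arc : V → V → Bool
  irrefl : ∀ v, arc v v = false
  oneArc : ∀ u v : V, u ≠ v → arc u v = !arc v u

namespace Tournament

variable {V : Type} [Fintype V]

/-- Outdegree `d⁺(v)`. -/
def outDeg (T : Tournament V) (v : V) : ℕ :=
  (univ.filter fun w => T.arc v w).card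

/-- Indegree `d⁻(v)`. -/
def inDeg (T : Tournament V) (v : V) : ℕ :=
  (univ.filter fun u => T.arc u v).card

/-- `δ(v) = min{d⁺(v), d⁻(v)}`. -/
def minDeg (T : Tournament V) (v : V) : ℕ :=
  min (T.outDeg v) (T.inDeg v)

/-- The irregularity `i(T)`: the maximum of `|d⁺(v) − d⁻(v)|` over all vertices. -/
def irreg (T : Tournament V) : ℕ :=
  univ.sup fun v => ((T.outDeg v : ℤ) - (T.inDeg v : ℤ)).natAbs

/-- Strong connectivity: every vertex can reach every other vertex by a directed path. -/
def StronglyConnected (T : Tournament V) : Prop :=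
  ∀ u v : V, Relation.ReflTransGen (fun a b => T.arc a b) u v

/-- The number of in-arcs of `v` with color `c`. -/
def monoInDeg (T : Tournament V) (C : V → V → ℕ) (v : V) (c : ℕ) : ℕ :=
  (univ.filter fun u => T.arc u v ∧ C u v = c).card

/-- The number of out-arcs of `v` with color `c`. -/
def monoOutDeg (T : Tournament V) (C : V → V → ℕ) (v : V) (c : ℕ) : ℕ :=
  (univ.filter fun w => T.arc v w ∧ C v w = c).card

/-- The maximum monochromatic indegree `Δ^{-mon}(T)`. -/
def maxMonoIn (T : Tournament V) (C : V → V → ℕ) : ℕ :=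
  univ.sup fun v => (univ.image fun u => C u v).sup (T.monoInDeg C v)

/-- The maximum monochromatic outdegree `Δ^{+mon}(T)`. -/
def maxMonoOut (T : Tournament V) (C : V → V → ℕ) : ℕ :=
  univ.sup fun v => (univ.image fun w => C v w).sup (T.monoOutDeg C v)

/-- The directed triangles through `v`, encoded as ordered pairs `(w, u)` with
arcs `v → w → u → v`.  This gives each triangle through `v` exactly once. -/
def trianglesThrough (T : Tournament V) (v : V) : Finset (V × V) :=
  univ.filter fun p => T.arc v p.1 ∧ T.arc p.1 p.2 ∧ T.arc p.2 v

/-- The rainbow triangles through `v`: all three arcs have pairwise distinct colors. -/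
def rainbowTrianglesThrough (T : Tournament V) (C : V → V → ℕ) (v : V) : Finset (V × V) :=
  (T.trianglesThrough v).filter fun p =>
    C v p.1 ≠ C p.1 p.2 ∧ C p.1 p.2 ≠ C p.2 v ∧ C p.2 v ≠ C v p.1

/-- The non-rainbow triangles through `v`: some two arcs share a color. -/
def nonRainbowTrianglesThrough (T : Tournament V) (C : V → V → ℕ) (v : V) : Finset (V × V) :=
  (T.trianglesThrough v).filter fun p =>
    ¬(C v p.1 ≠ C p.1 p.2 ∧ C p.1 p.2 ≠ C p.2 v ∧ C p.2 v ≠ C v p.1)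

/-- Ordered triples `(x, y, z)` with arcs `x → y → z → x`.  Each directed triangle
is counted exactly three times (once per cyclic rotation). -/
def triangleTriples (T : Tournament V) : Finset (V × V × V) :=
  univ.filter fun p => T.arc p.1 p.2.1 ∧ T.arc p.2.1 p.2.2 ∧ T.arc p.2.2 p.1

/-- Ordered triples representing rainbow triangles (each rainbow triangle thrice). -/
def rainbowTriples (T : Tournament V) (C : V → V → ℕ) : Finset (V × V × V) :=
  T.triangleTriples.filter fun p =>
    C p.1 p.2.1 ≠ C p.2.1 p.2.2 ∧ C p.2.1 p.2.2 ≠ C p.2.2 p.1 ∧ C p.2.2 p.1 ≠ C p.1 p.2.1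

/-- Ordered triples representing non-rainbow triangles (each such triangle thrice). -/
def nonRainbowTriples (T : Tournament V) (C : V → V → ℕ) : Finset (V × V × V) :=
  T.triangleTriples.filter fun p =>
    ¬(C p.1 p.2.1 ≠ C p.2.1 p.2.2 ∧ C p.2.1 p.2.2 ≠ C p.2.2 p.1 ∧ C p.2.2 p.1 ≠ C p.1 p.2.1)

end Tournament

/-!
A non-rainbow directed triangle `x → y → z → x` has two arcs of the same colour, and any two
arcs of a directed triangle are consecutive; so some cyclic rotation of the triangle starts with
a monochromatic 2-path. A monochromatic 2-path `x → y → z` is determined by its last arc `y → z`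
and the in-neighbour `x` of `y` of colour `C y z`, of which there are at most `Δ^{-mon}`. Hence the
number of such 2-paths is at most `Δ^{-mon}` times the number `n(n-1)/2` of arcs.
-/

def tripleRotate (α : Type*) : α × α × α ≃ α × α × α where
  toFun p := (p.2.1, p.2.2, p.1)
  invFun p := (p.2.2, p.1, p.2.1)
  left_inv _ := rfl
  right_inv _ := rfl

namespace Tournament

variable {V : Type} (T : Tournament V)

theorem ne_of_arc {u v : V} (h : T.arc u v) : u ≠ v := by
  rintro rfl
  simp [T.irrefl] at h

variable [Fintype V] (C : V → V → ℕ)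

def arcs : Finset (V × V) :=
  univ.filter fun q => T.arc q.1 q.2

theorem two_mul_card_arcs_add_card :
    2 * #T.arcs + Fintype.card V = Fintype.card V * Fintype.card V := by
  classical
  let σ := (Equiv.prodComm V V).toEmbedding
  have hunion : T.arcs ∪ T.arcs.map σ = (univ : Finset V).offDiag := by
    ext ⟨u, v⟩
    simp only [σ, arcs, mem_union, mem_map_equiv, Equiv.prodComm_symm, Equiv.prodComm_apply,
      Prod.swap_prod_mk, mem_filter, mem_univ, true_and, mem_offDiag]
    constructor
    · rintro (h | h)
      exacts [T.ne_of_arc h, (T.ne_of_arc h).symm]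
    · intro h
      rw [T.oneArc u v h]
      cases T.arc v u <;> simp
  have hdisj : Disjoint T.arcs (T.arcs.map σ) := by
    simp only [σ, disjoint_left, arcs, mem_map_equiv, Equiv.prodComm_symm, Equiv.prodComm_apply,
      Prod.fst_swap, Prod.snd_swap, mem_filter, mem_univ, true_and]
    rintro ⟨u, v⟩ huv hvu
    simp [T.oneArc _ _ (T.ne_of_arc huv), hvu] at huv
  have hcard := card_union_of_disjoint hdisj
  rw [hunion, card_map, offDiag_card, card_univ] at hcard
  have := Nat.le_mul_self (Fintype.card V)
  omega

theorem monoInDeg_le_maxMonoIn (v : V) (c : ℕ) : T.monoInDeg C v c ≤ T.maxMonoIn C := by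
  rcases (univ.filter fun u => T.arc u v ∧ C u v = c).eq_empty_or_nonempty with h | ⟨u, hu⟩
  · simp [monoInDeg, h]
  · simp only [mem_filter, mem_univ, true_and] at hu
    calc T.monoInDeg C v c ≤ (univ.image fun u => C u v).sup (T.monoInDeg C v) :=
          le_sup (mem_image.mpr ⟨u, mem_univ u, hu.2⟩)
      _ ≤ T.maxMonoIn C :=
          le_sup (f := fun v => (univ.image fun u => C u v).sup (T.monoInDeg C v)) (mem_univ v)

def monoPaths : Finset (V × V × V) :=
  univ.filter fun p => T.arc p.1 p.2.1 ∧ T.arc p.2.1 p.2.2 ∧ C p.1 p.2.1 = C p.2.1 p.2.2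

theorem card_monoPaths_le : #(T.monoPaths C) ≤ T.maxMonoIn C * #T.arcs := by
  classical
  refine card_le_mul_card_image_of_maps_to (f := Prod.snd) ?_ _ fun q _ => ?_
  · intro p hp
    simp only [monoPaths, arcs, mem_filter, mem_univ, true_and] at hp ⊢
    exact hp.2.1
  · refine le_trans ?_ (T.monoInDeg_le_maxMonoIn C q.1 (C q.1 q.2))
    refine card_le_card_of_injOn Prod.fst ?_ fun p hp p' hp' h => ?_
    · rintro ⟨x, y, z⟩ hp
      simp only [coe_filter, monoPaths, mem_filter, mem_univ, true_and, Set.mem_ofPred_eq] at hp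
      obtain ⟨⟨hxy, -, hc⟩, rfl⟩ := hp
      simpa [monoInDeg] using ⟨hxy, hc⟩
    · simp only [coe_filter, Set.mem_ofPred_eq] at hp hp'
      exact Prod.ext h (hp.2.trans hp'.2.symm)

theorem card_nonRainbowTriples_le : #(T.nonRainbowTriples C) ≤ 3 * #(T.monoPaths C) := by
  classical
  set M := T.monoPaths C
  let ρ := tripleRotate V
  have hsub : T.nonRainbowTriples C ⊆ M ∪ M.map ρ.symm.toEmbedding ∪ M.map ρ.toEmbedding := by
    rintro ⟨x, y, z⟩ hp
    simp only [nonRainbowTriples, triangleTriples, mem_filter, mem_univ, true_and] at hp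
    obtain ⟨⟨hxy, hyz, hzx⟩, hc⟩ := hp
    simp only [M, ρ, tripleRotate, mem_union, mem_map_equiv, Equiv.symm_symm, Equiv.coe_fn_mk,
      Equiv.coe_fn_symm_mk, monoPaths, mem_filter, mem_univ, true_and]
    tauto
  calc #(T.nonRainbowTriples C)
      ≤ #(M ∪ M.map ρ.symm.toEmbedding ∪ M.map ρ.toEmbedding) := card_le_card hsub
    _ ≤ #M + #M + #M := by
      grw [card_union_le, card_union_le, card_map, card_map]
    _ = 3 * #M := by ring

end Tournament

theorem count_nonrainbow_triangles_upper_bound_general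
    {V : Type} [Fintype V] (n : ℕ) (hn : Fintype.card V = n)
    (T : Tournament V) (C : V → V → ℕ) :
    ((T.nonRainbowTriples C).card : ℚ) / 3 ≤
      (n : ℚ) * ((n : ℚ) - 1) * (T.maxMonoIn C : ℚ) / 2 := by
  subst hn
  have hcount : (#(T.nonRainbowTriples C) : ℚ) ≤ 3 * (T.maxMonoIn C * #T.arcs) := by
    exact_mod_cast (T.card_nonRainbowTriples_le C).trans
      (Nat.mul_le_mul_left 3 (T.card_monoPaths_le C))
  have harcs : 2 * (#T.arcs : ℚ) + Fintype.card V = Fintype.card V * Fintype.card V := by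
    exact_mod_cast T.two_mul_card_arcs_add_card
  calc (#(T.nonRainbowTriples C) : ℚ) / 3
      ≤ T.maxMonoIn C * #T.arcs := by linarith
    _ = Fintype.card V * (Fintype.card V - 1) * T.maxMonoIn C / 2 := by
      linear_combination (T.maxMonoIn C / 2 : ℚ) * harcs

/-- Lemma 4: A strongly connected arc-colored tournament of order `n`
has at most `n(n−1)Δ^{-mon}/2` non-rainbow triangles.  Here
`(T.nonRainbowTriples C).card / 3` is the number of non-rainbow triangles, since
each triangle is represented by its three cyclic rotations. -/
theorem count_nonrainbow_triangles_upper_bound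
    {V : Type} [Fintype V] (n : ℕ) (hn : Fintype.card V = n)
    (T : Tournament V) (C : V → V → ℕ)
    (hsc : T.StronglyConnected) :
    ((T.nonRainbowTriples C).card : ℚ) / 3 ≤
      (n : ℚ) * ((n : ℚ) - 1) * (T.maxMonoIn C : ℚ) / 2 :=
  count_nonrainbow_triangles_upper_bound_general n hn T C
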